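/- For every diamond-necklace N_k (k ≥ 2), σ_{(2,2)}(N_k) = σ_{(2,3)}(N_k) = k + 1. -/

import Mathlib

open SimpleGraph Set

variable {V : Type*}

/-- One step of the (p,q)-spreading color change rule: a white vertex `w` with at least `p`
blue neighbors, at least one of which has at most `q` white neighbors, becomes blue. -/
def spreadStep (G : SimpleGraph V) (p : ℕ) (q : ℕ∞) (B : Set V) : Set V :=
  B ∪ {w | p ≤ (G.neighborSet w ∩ B).ncard ∧
      ∃ u ∈ G.neighborSet w ∩ B, ((G.neighborSet u \ B).ncard : ℕ∞) ≤ q}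

/-- `S` is a (p,q)-spreading set if iterating the rule eventually colors all vertices blue. -/
def IsSpreadingSet (G : SimpleGraph V) (p : ℕ) (q : ℕ∞) (S : Set V) : Prop :=
  ∃ n : ℕ, (spreadStep G p q)^[n] S = Set.univ

/-- The (p,q)-spreading number σ_{(p,q)}(G). -/
noncomputable def spreadNumber (G : SimpleGraph V) (p : ℕ) (q : ℕ∞) : ℕ :=
  sInf {k | ∃ S : Set V, S.ncard = k ∧ IsSpreadingSet G p q S}

/-- One step of r-neighbor bootstrap percolation. -/
def percStep (G : SimpleGraph V) (r : ℕ) (B : Set V) : Set V :=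
  B ∪ {w | r ≤ (G.neighborSet w ∩ B).ncard}

/-- `S` is an r-percolating set of `G`. -/
def IsPercolating (G : SimpleGraph V) (r : ℕ) (S : Set V) : Prop :=
  ∃ n : ℕ, (percStep G r)^[n] S = Set.univ

/-- The r-percolation number m(G,r). -/
noncomputable def percNumber (G : SimpleGraph V) (r : ℕ) : ℕ :=
  sInf {k | ∃ S : Set V, S.ncard = k ∧ IsPercolating G r S}

/-- A vertex cover of `G`. -/
def IsVertexCover (G : SimpleGraph V) (C : Set V) : Prop :=
  ∀ ⦃u v : V⦄, G.Adj u v → u ∈ C ∨ v ∈ C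

/-- The vertex cover number β(G). -/
noncomputable def coverNumber (G : SimpleGraph V) : ℕ :=
  sInf {k | ∃ C : Set V, C.ncard = k ∧ _root_.IsVertexCover G C}

/-- An independent set of `G`. -/
def IsIndep (G : SimpleGraph V) (I : Set V) : Prop :=
  I.Pairwise fun u v => ¬ G.Adj u v

/-- The independence number α(G). -/
noncomputable def indepNumber (G : SimpleGraph V) : ℕ :=
  sSup {k | ∃ I : Set V, I.ncard = k ∧ IsIndep G I}

/-- `G` has no induced `K_{1,3}`. -/
def ClawFree (G : SimpleGraph V) : Prop :=
  ¬ ∃ v a b c : V, a ≠ b ∧ a ≠ c ∧ b ≠ c ∧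
    G.Adj v a ∧ G.Adj v b ∧ G.Adj v c ∧ ¬ G.Adj a b ∧ ¬ G.Adj a c ∧ ¬ G.Adj b c

/-- The set `T` is (the vertex set of) a triangle of `G`. -/
def IsTriangle (G : SimpleGraph V) (T : Set V) : Prop :=
  ∃ a b c : V, a ≠ b ∧ a ≠ c ∧ b ≠ c ∧
    G.Adj a b ∧ G.Adj a c ∧ G.Adj b c ∧ T = {a, b, c}

/-- The set `D` induces a diamond (`K_4` minus the edge `ab`) in `G`. -/
def IsDiamond (G : SimpleGraph V) (D : Set V) : Prop :=
  ∃ a b c d : V, a ≠ b ∧ a ≠ c ∧ a ≠ d ∧ b ≠ c ∧ b ≠ d ∧ c ≠ d ∧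
    ¬ G.Adj a b ∧ G.Adj a c ∧ G.Adj a d ∧ G.Adj b c ∧ G.Adj b d ∧ G.Adj c d ∧
    D = {a, b, c, d}

/-- `P` is a partition of the vertex set of `G` into sets each inducing a triangle
or a diamond (a triangle-diamond partition). -/
def IsTDPartition (G : SimpleGraph V) (P : Set (Set V)) : Prop :=
  (∀ S ∈ P, IsTriangle G S ∨ IsDiamond G S) ∧ ∀ v : V, ∃! S : Set V, S ∈ P ∧ v ∈ S

/-- The diamond-necklace `N_k`: the vertex `(i, 0)` is `a_i`, `(i, 1)` is `b_i`,
`(i, 2)` is `c_i`, `(i, 3)` is `d_i`; inside each diamond all edges except `a_i b_i`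
are present, and consecutive diamonds are linked by the edges `a_i b_{i+1}`. -/
def diamondNecklace (k : ℕ) : SimpleGraph (ZMod k × Fin 4) :=
  SimpleGraph.fromRel (fun x y =>
    (x.1 = y.1 ∧ ¬ (x.2 = 0 ∧ y.2 = 1) ∧ ¬ (x.2 = 1 ∧ y.2 = 0))
    ∨ (y.1 = x.1 + 1 ∧ x.2 = 0 ∧ y.2 = 1))

/-- The triangle-necklace `F_{2k}`: the vertex `(j, 0)` is `x_{j+1}`, `(j, 1)` is `y_{j+1}`,
`(j, 2)` is `z_{j+1}`; each triple `{x,y,z}` with the same first coordinate is a triangle,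
and the triangles are linked by the edges `x_{2i-1}x_{2i}`, `y_{2i-1}y_{2i}` and
`z_{2i}z_{2i+1}` (indices modulo `2k`). -/
def triangleNecklace (k : ℕ) : SimpleGraph (ZMod (2 * k) × Fin 3) :=
  SimpleGraph.fromRel (fun x y =>
    (x.1 = y.1 ∧ x.2 ≠ y.2)
    ∨ (y.1 = x.1 + 1 ∧ Even x.1.val ∧ ((x.2 = 0 ∧ y.2 = 0) ∨ (x.2 = 1 ∧ y.2 = 1)))
    ∨ (y.1 = x.1 + 1 ∧ Odd x.1.val ∧ x.2 = 2 ∧ y.2 = 2))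

/-! In a cubic graph, run `2`-neighbour bootstrap percolation from `S`. A vertex turning blue
has at least two blue neighbours and at most one white one, so the number of blue–white edges
drops at least by the number of vertices turning blue. One step before the end every white vertex
has at least two blue neighbours (three if it is the only white vertex), which leaves a surplus
of `2`. Starting from at
most `3|S|` boundary edges this gives `4|S| ≥ |V| + 2`, i.e. `|S| ≥ k + 1` for `N_k`, and
`(2,q)`-spreading is a restriction of percolation. Conversely the `k + 1` vertices `c_i` and `d_0`
spread: `c_i, d_i` force `a_i`, then `b_{i+1}`, then `d_{i+1}`, each time through a blue vertex
with at most two white neighbours. -/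

open Function

section Spreading

variable (G : SimpleGraph V)

lemma spreadStep_le_percStep (p : ℕ) (q : ℕ∞) : spreadStep G p q ≤ percStep G p := fun _ =>
  union_subset_union_right _ fun _ hw => hw.1

lemma spreadStep_le_spreadStep (p : ℕ) {q q' : ℕ∞} (h : q ≤ q') :
    spreadStep G p q ≤ spreadStep G p q' := fun _ =>
  union_subset_union_right _ fun _ ⟨hp, u, hu, hq⟩ => ⟨hp, u, hu, hq.trans h⟩

lemma spreadStep_mono [Finite V] (p : ℕ) (q : ℕ∞) : Monotone (spreadStep G p q) := by
  refine fun B C h => union_subset_union h fun w ⟨hp, u, hu, hq⟩ => ⟨?_, u, ⟨hu.1, h hu.2⟩, ?_⟩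
  · exact hp.trans (ncard_le_ncard (inter_subset_inter_right _ h))
  · exact le_trans (by exact_mod_cast ncard_le_ncard (sdiff_subset_sdiff_right h)) hq

variable {G} [Finite V] {p : ℕ} {q : ℕ∞} {S : Set V}

lemma IsSpreadingSet.isPercolating (hS : IsSpreadingSet G p q S) : IsPercolating G p S := by
  obtain ⟨n, hn⟩ := hS
  exact ⟨n, univ_subset_iff.mp (hn ▸
    (spreadStep_mono G p q).iterate_le_of_le (spreadStep_le_percStep G p q) n S)⟩

lemma IsSpreadingSet.mono {q' : ℕ∞} (h : q ≤ q') (hS : IsSpreadingSet G p q S) :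
    IsSpreadingSet G p q' S := by
  obtain ⟨n, hn⟩ := hS
  exact ⟨n, univ_subset_iff.mp (hn ▸
    (spreadStep_mono G p q).iterate_le_of_le (spreadStep_le_spreadStep G p h) n S)⟩

lemma mem_of_spreadStep_subset {B : Set V} (hB : spreadStep G 2 2 B ⊆ B) {w u v x : V}
    (hu : (G.neighborSet u).ncard ≤ 3) (hwu : G.Adj w u) (hwv : G.Adj w v) (huv : u ≠ v)
    (huB : u ∈ B) (hvB : v ∈ B) (hux : G.Adj u x) (hxB : x ∈ B) : w ∈ B := by
  refine hB (Or.inr ⟨?_, u, ⟨hwu, huB⟩, ?_⟩)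
  · calc 2 = ({u, v} : Set V).ncard := (ncard_pair huv).symm
      _ ≤ (G.neighborSet w ∩ B).ncard := ncard_le_ncard (pair_subset ⟨hwu, huB⟩ ⟨hwv, hvB⟩)
  · have : (G.neighborSet u \ B).ncard ≤ 2 := calc
      _ ≤ (G.neighborSet u \ {x}).ncard :=
        ncard_le_ncard (sdiff_subset_sdiff_right (singleton_subset_iff.mpr hxB))
      _ = (G.neighborSet u).ncard - 1 := ncard_sdiff_singleton_of_mem hux
      _ ≤ 2 := by omega
    exact_mod_cast this

/-- Since `spreadStep` is inflationary and `V` is finite, its iterates stabilise at a closed set. -/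
lemma isSpreadingSet_of_forall_closed
    (h : ∀ B, S ⊆ B → spreadStep G p q B ⊆ B → B = univ) : IsSpreadingSet G p q S := by
  let orbit : ℕ →o Set V := ⟨fun n => (spreadStep G p q)^[n] S, monotone_nat_of_le_succ fun n => by
    rw [iterate_succ_apply']; exact subset_union_left⟩
  obtain ⟨n, hn⟩ := WellFoundedGT.monotone_chain_condition orbit
  refine ⟨n, h _ (orbit.monotone n.zero_le) ?_⟩
  have := hn (n + 1) n.le_succ
  simp only [orbit, OrderHom.coe_mk, iterate_succ_apply'] at this
  exact this.symm.subset

end Spreading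

section EdgeCount

open scoped Classical
open Finset

variable [Fintype V] (G : SimpleGraph V)

noncomputable def edgeCount (s t : Set V) : ℕ := ∑ u ∈ s.toFinset, (G.neighborSet u ∩ t).ncard

lemma ncard_neighborSet_inter (u : V) (t : Set V) :
    (G.neighborSet u ∩ t).ncard = #{v ∈ t.toFinset | G.Adj u v} := by
  rw [← ncard_coe_finset]; congr 1; ext v; simp [and_comm]

lemma edgeCount_comm (s t : Set V) : edgeCount G s t = edgeCount G t s := by
  simp only [edgeCount, ncard_neighborSet_inter]
  convert sum_card_bipartiteAbove_eq_sum_card_bipartiteBelow G.Adj using 3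
  all_goals ext; simp [bipartiteAbove, bipartiteBelow, G.adj_comm]

variable {G}

lemma edgeCount_union_right {s t t' : Set V} (h : Disjoint t t') :
    edgeCount G s (t ∪ t') = edgeCount G s t + edgeCount G s t' := by
  simp only [edgeCount, ← sum_add_distrib, inter_union_distrib_left]
  exact sum_congr rfl fun u _ => ncard_union_eq (h.mono inter_subset_right inter_subset_right)

lemma edgeCount_le_mul {s t : Set V} {d : ℕ} (h : ∀ u ∈ s, (G.neighborSet u ∩ t).ncard ≤ d) :
    edgeCount G s t ≤ d * s.ncard := by
  rw [ncard_eq_toFinset_card', mul_comm, ← smul_eq_mul, ← sum_const]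
  exact sum_le_sum fun u hu => h u (mem_toFinset.mp hu)

lemma mul_le_edgeCount {s t : Set V} {d : ℕ} (h : ∀ u ∈ s, d ≤ (G.neighborSet u ∩ t).ncard) :
    d * s.ncard ≤ edgeCount G s t := by
  rw [ncard_eq_toFinset_card', mul_comm, ← smul_eq_mul, ← sum_const]
  exact sum_le_sum fun u hu => h u (mem_toFinset.mp hu)

lemma edgeCount_add_ncard_le {s t t' : Set V}
    (h : ∀ u ∈ s, (G.neighborSet u ∩ t).ncard < (G.neighborSet u ∩ t').ncard) :
    edgeCount G s t + s.ncard ≤ edgeCount G s t' := by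
  rw [ncard_eq_toFinset_card', card_eq_sum_ones, edgeCount, ← sum_add_distrib]
  exact sum_le_sum fun u hu => h u (mem_toFinset.mp hu)

end EdgeCount

section Percolation

variable [Fintype V] {G : SimpleGraph V}

lemma edgeCount_percStep_add_ncard_le (hdeg : ∀ v, (G.neighborSet v).ncard ≤ 3) (B : Set V) :
    edgeCount G (percStep G 2 B) (percStep G 2 B)ᶜ + (percStep G 2 B \ B).ncard ≤
      edgeCount G B Bᶜ := by
  set B' := percStep G 2 B
  set N := B' \ B
  set W := B'ᶜ
  have hBB' : B ⊆ B' := subset_union_left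
  have hB' : B' = B ∪ N := (union_sdiff_cancel hBB').symm
  have hBc : Bᶜ = N ∪ W := by
    ext x
    have := @hBB' x
    simp only [N, W, mem_compl_iff, mem_union, mem_sdiff]
    tauto
  have hNW : Disjoint N W := disjoint_compl_right.mono_left sdiff_subset
  have hboundary : edgeCount G N W + N.ncard ≤ edgeCount G N B := by
    refine edgeCount_add_ncard_le fun w hw => ?_
    have h2 : 2 ≤ (G.neighborSet w ∩ B).ncard := hw.1.resolve_left hw.2
    have h3 : (G.neighborSet w ∩ W).ncard + (G.neighborSet w ∩ B).ncard ≤ 3 := by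
      rw [← ncard_union_eq ((disjoint_compl_left.mono_right hBB').mono inter_subset_right
        inter_subset_right)]
      exact (ncard_le_ncard (union_subset inter_subset_left inter_subset_left)).trans (hdeg w)
    omega
  have e1 : edgeCount G B Bᶜ = edgeCount G N B + edgeCount G B W := by
    rw [hBc, edgeCount_union_right hNW, edgeCount_comm G B N]
  have e2 : edgeCount G B' W = edgeCount G B W + edgeCount G N W := by
    rw [edgeCount_comm, hB', edgeCount_union_right disjoint_sdiff_right, edgeCount_comm G W,
      edgeCount_comm G W]
  omega

lemma ncard_compl_add_two_le_edgeCount_of_percStep_eq_univ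
    (hreg : ∀ v, (G.neighborSet v).ncard = 3) {B : Set V} (hB : percStep G 2 B = univ)
    (hne : B ≠ univ) : Bᶜ.ncard + 2 ≤ edgeCount G B Bᶜ := by
  rw [edgeCount_comm]
  have h2 : 2 * Bᶜ.ncard ≤ edgeCount G Bᶜ B := mul_le_edgeCount fun w hw =>
    ((hB ▸ mem_univ w : w ∈ percStep G 2 B)).resolve_left hw
  have hpos : 0 < Bᶜ.ncard := (ncard_pos).mpr (nonempty_compl.mpr hne)
  obtain hlt | hge := lt_or_ge Bᶜ.ncard 2
  · -- a single white vertex has all three of its neighbours blue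
    obtain ⟨w, hw⟩ := ncard_eq_one.mp (by omega : Bᶜ.ncard = 1)
    have h3 : 3 * Bᶜ.ncard ≤ edgeCount G Bᶜ B := mul_le_edgeCount fun u hu => by
      rw [hw, mem_singleton_iff] at hu
      subst hu
      rw [inter_eq_left.mpr fun v hv => ?_, hreg]
      by_contra hvB
      exact G.ne_of_adj hv (mem_singleton_iff.mp (hw ▸ hvB)).symm
    omega
  · omega

lemma ncard_compl_add_two_le_edgeCount (hreg : ∀ v, (G.neighborSet v).ncard = 3) (n : ℕ)
    {B : Set V} (hB : (percStep G 2)^[n] B = univ) (hne : B ≠ univ) :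
    Bᶜ.ncard + 2 ≤ edgeCount G B Bᶜ := by
  induction n generalizing B with
  | zero => exact absurd hB hne
  | succ n ih =>
    rw [iterate_succ_apply] at hB
    by_cases hB' : percStep G 2 B = univ
    · exact ncard_compl_add_two_le_edgeCount_of_percStep_eq_univ hreg hB' hne
    have hBB' : B ⊆ percStep G 2 B := subset_union_left
    have := ih hB hB'
    have := edgeCount_percStep_add_ncard_le (fun v => (hreg v).le) B
    have := ncard_sdiff hBB'
    have := ncard_le_ncard hBB'
    have := ncard_add_ncard_compl B
    have := ncard_add_ncard_compl (percStep G 2 B)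
    omega

lemma IsPercolating.card_add_two_le [Nonempty V] (hreg : ∀ v, (G.neighborSet v).ncard = 3)
    {S : Set V} (hS : IsPercolating G 2 S) : Nat.card V + 2 ≤ 4 * S.ncard := by
  have hcard := ncard_add_ncard_compl S
  by_cases hS' : S = univ
  · have : 0 < Nat.card V := Nat.card_pos
    rw [hS', ncard_univ] at hcard ⊢
    omega
  obtain ⟨n, hn⟩ := hS
  have h1 := ncard_compl_add_two_le_edgeCount hreg n hn hS'
  have h2 : edgeCount G S Sᶜ ≤ 3 * S.ncard :=
    edgeCount_le_mul fun u _ => (ncard_le_ncard inter_subset_left).trans (hreg u).le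
  omega

end Percolation

section DiamondNecklace

variable {k : ℕ}

lemma diamondNecklace_neighborSet_a (i : ZMod k) :
    (diamondNecklace k).neighborSet (i, 0) = {(i, 2), (i, 3), (i + 1, 1)} := by
  ext ⟨j, t⟩
  fin_cases t <;> simp [diamondNecklace, Prod.ext_iff] <;> grind

lemma diamondNecklace_neighborSet_b (i : ZMod k) :
    (diamondNecklace k).neighborSet (i, 1) = {(i, 2), (i, 3), (i - 1, 0)} := by
  ext ⟨j, t⟩
  fin_cases t <;> simp [diamondNecklace, Prod.ext_iff] <;> grind

lemma diamondNecklace_neighborSet_c (i : ZMod k) :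
    (diamondNecklace k).neighborSet (i, 2) = {(i, 0), (i, 1), (i, 3)} := by
  ext ⟨j, t⟩
  fin_cases t <;> simp [diamondNecklace, Prod.ext_iff] <;> grind

lemma diamondNecklace_neighborSet_d (i : ZMod k) :
    (diamondNecklace k).neighborSet (i, 3) = {(i, 0), (i, 1), (i, 2)} := by
  ext ⟨j, t⟩
  fin_cases t <;> simp [diamondNecklace, Prod.ext_iff] <;> grind

lemma diamondNecklace_ncard_neighborSet (v : ZMod k × Fin 4) :
    ((diamondNecklace k).neighborSet v).ncard = 3 := by
  obtain ⟨i, t⟩ := v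
  fin_cases t <;>
    simp only [Fin.zero_eta, Fin.mk_one, Fin.reduceFinMk, diamondNecklace_neighborSet_a,
      diamondNecklace_neighborSet_b, diamondNecklace_neighborSet_c,
      diamondNecklace_neighborSet_d] <;>
    exact ncard_eq_three.mpr ⟨_, _, _, by simp, by simp, by simp, rfl⟩

lemma diamondNecklace_eq_univ_of_spreadStep_subset [NeZero k] {B : Set (ZMod k × Fin 4)}
    (hB : spreadStep (diamondNecklace k) 2 2 B ⊆ B) (hc : ∀ i, (i, 2) ∈ B)
    (hd : ((0 : ZMod k), 3) ∈ B) : B = univ := by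
  have hdeg (v : ZMod k × Fin 4) := (diamondNecklace_ncard_neighborSet v).le
  have hstep (i : ZMod k) (hdi : (i, 3) ∈ B) : (i, 0) ∈ B ∧ (i + 1, 1) ∈ B ∧ (i + 1, 3) ∈ B := by
    have ha : (i, 0) ∈ B := mem_of_spreadStep_subset hB (hdeg (i, 2)) (v := (i, 3)) (x := (i, 3))
      (by simp [diamondNecklace]) (by simp [diamondNecklace]) (by simp) (hc i) hdi
      (by simp [diamondNecklace]) hdi
    have hb : (i + 1, 1) ∈ B := mem_of_spreadStep_subset hB (hdeg (i, 0)) (v := (i + 1, 2))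
      (x := (i, 2)) (by simp [diamondNecklace]) (by simp [diamondNecklace]) (by simp) ha
      (hc _) (by simp [diamondNecklace]) (hc i)
    refine ⟨ha, hb, mem_of_spreadStep_subset hB (hdeg (i + 1, 2)) (v := (i + 1, 1))
      (x := (i + 1, 1)) (by simp [diamondNecklace]) (by simp [diamondNecklace]) (by simp)
      (hc _) hb (by simp [diamondNecklace]) hb⟩
  have hd_all (i : ZMod k) : (i, 3) ∈ B := by
    rw [← ZMod.natCast_zmod_val i]
    induction i.val with
    | zero => simpa using hd
    | succ n ih => simpa using (hstep _ ih).2.2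
  refine eq_univ_of_forall fun ⟨i, t⟩ => ?_
  fin_cases t
  · exact (hstep i (hd_all i)).1
  · simpa using (hstep (i - 1) (hd_all _)).2.1
  · exact hc i
  · exact hd_all i

def necklaceSeed (k : ℕ) : Set (ZMod k × Fin 4) := insert (0, 3) (range fun i => (i, 2))

lemma ncard_necklaceSeed [NeZero k] : (necklaceSeed k).ncard = k + 1 := by
  rw [necklaceSeed, ncard_insert_of_notMem (by simp),
    ncard_range_of_injective (fun i j h => by simpa using h), Nat.card_zmod]

lemma isSpreadingSet_necklaceSeed [NeZero k] :
    IsSpreadingSet (diamondNecklace k) 2 2 (necklaceSeed k) :=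
  isSpreadingSet_of_forall_closed fun _ hSB hB => diamondNecklace_eq_univ_of_spreadStep_subset hB
    (fun i => hSB (Or.inr ⟨i, rfl⟩)) (hSB (Or.inl rfl))

lemma succ_le_ncard_of_isPercolating [NeZero k] {S : Set (ZMod k × Fin 4)}
    (hS : IsPercolating (diamondNecklace k) 2 S) : k + 1 ≤ S.ncard := by
  have := hS.card_add_two_le diamondNecklace_ncard_neighborSet
  rw [Nat.card_prod, Nat.card_zmod, Nat.card_fin] at this
  omega

end DiamondNecklace

theorem stmt15 (k : ℕ) (hk : 2 ≤ k) :
    spreadNumber (diamondNecklace k) 2 2 = k + 1 ∧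
    spreadNumber (diamondNecklace k) 2 3 = k + 1 := by
  have : NeZero k := ⟨by omega⟩
  have hleast (q : ℕ∞) (hq : 2 ≤ q) :
      IsLeast {m | ∃ S, S.ncard = m ∧ IsSpreadingSet (diamondNecklace k) 2 q S} (k + 1) :=
    ⟨⟨_, ncard_necklaceSeed, isSpreadingSet_necklaceSeed.mono hq⟩,
      fun _ ⟨_, hm, hS⟩ => hm ▸ succ_le_ncard_of_isPercolating hS.isPercolating⟩
  exact ⟨(hleast 2 le_rfl).csInf_eq, (hleast 3 (by norm_num)).csInf_eq⟩
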